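/- arXiv:2006.09918 — 5 statements merged into one kernel-verified Lean document; each statement's English description precedes it below -/
import Mathlib

section
/- The Lüders mixture operation: let π = {B_1,...,B_m} be a partition of Fin n and S ⊆ Fin n with Pr(S) > 0. Then ∑_{j=1}^m P_{B_j} · ρ(ΣS) · P_{B_j} = ∑_{j : Pr(B_j ∩ S) > 0} (Pr(B_j ∩ S)/Pr(S)) · ρ(Σ(B_j ∩ S)). -/
open Matrix BigOperators

/-- `Pr p S = ∑_{i ∈ S} p i`, the probability of the event `S`. -/
noncomputable def Pr {n : ℕ} (p : Fin n → ℝ) (S : Finset (Fin n)) : ℝ :=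
  ∑ i ∈ S, p i

/-- The superposition density matrix `ρ(ΣS)`: entry `(i,k)` is
`√(p i * p k) / Pr p S` if `i ∈ S` and `k ∈ S`, and `0` otherwise. -/
noncomputable def rhoSigma {n : ℕ} (p : Fin n → ℝ) (S : Finset (Fin n)) :
    Matrix (Fin n) (Fin n) ℝ :=
  Matrix.of fun i k =>
    if i ∈ S ∧ k ∈ S then Real.sqrt (p i * p k) / Pr p S else 0

/-- The classical density matrix `ρ(ΔS)`: diagonal entry `(i,i)` is
`p i / Pr p S` if `i ∈ S`, all other entries are `0`. -/
noncomputable def rhoDelta {n : ℕ} (p : Fin n → ℝ) (S : Finset (Fin n)) :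
    Matrix (Fin n) (Fin n) ℝ :=
  Matrix.of fun i k =>
    if i = k ∧ i ∈ S then p i / Pr p S else 0

/-- The diagonal projection matrix `P_T`: entry `(i,i)` is `1` if `i ∈ T`, else `0`. -/
def projMat {n : ℕ} (T : Finset (Fin n)) : Matrix (Fin n) (Fin n) ℝ :=
  Matrix.of fun i k => if i = k ∧ i ∈ T then 1 else 0


lemma projMat_mul {n : ℕ} (T : Finset (Fin n)) (A : Matrix (Fin n) (Fin n) ℝ) :
    projMat T * A = Matrix.of fun i k => if i ∈ T then A i k else 0 := by
  ext i k
  by_cases hi : i ∈ T <;> simp [projMat, Matrix.mul_apply, hi, ite_and]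

lemma mul_projMat {n : ℕ} (T : Finset (Fin n)) (A : Matrix (Fin n) (Fin n) ℝ) :
    A * projMat T = Matrix.of fun i k => if k ∈ T then A i k else 0 := by
  ext i k
  by_cases hk : k ∈ T <;> simp [projMat, Matrix.mul_apply, hk, ite_and, eq_comm]

lemma luders_key {n : ℕ} (p : Fin n → ℝ) (hp0 : ∀ i, 0 ≤ p i)
    (S T : Finset (Fin n)) :
    projMat T * rhoSigma p S * projMat T
      = (Pr p (T ∩ S) / Pr p S) • rhoSigma p (T ∩ S) := by
  rw [projMat_mul, mul_projMat]
  ext i k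
  simp only [Matrix.smul_apply, Matrix.of_apply, rhoSigma, Finset.mem_inter, smul_eq_mul]
  by_cases hi : i ∈ T ∧ i ∈ S
  · by_cases hk : k ∈ T ∧ k ∈ S
    · simp only [hi, hk, hi.1, hi.2, hk.1, hk.2, and_self, if_true, true_and]
      by_cases hPr : Pr p (T ∩ S) = 0
      · have hpi : p i = 0 := by
          have := (Finset.sum_eq_zero_iff_of_nonneg (fun x _ => hp0 x)).mp hPr i
            (Finset.mem_inter.mpr hi)
          exact this
        simp [hpi, hPr]
      · rw [div_mul_div_comm, mul_comm (Pr p S) (Pr p (T ∩ S)),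
          mul_div_mul_left _ _ hPr]
    · rcases not_and_or.mp hk with h | h <;> simp [h]
  · rcases not_and_or.mp hi with h | h <;> simp [h]

/-- The Lüders mixture operation: for a partition B of Fin n,
∑_j P_{B_j} ρ(ΣS) P_{B_j} = ∑_{j : Pr(B_j ∩ S) > 0} (Pr(B_j ∩ S)/Pr(S)) • ρ(Σ(B_j ∩ S)). -/
theorem luders_mixture (n : ℕ) (hn : 1 ≤ n) (p : Fin n → ℝ)
    (hp0 : ∀ i, 0 ≤ p i) (hp1 : ∑ i, p i = 1)
    (m : ℕ) (B : Fin m → Finset (Fin n))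
    (hdisj : ∀ j j' : Fin m, j ≠ j' → Disjoint (B j) (B j'))
    (hne : ∀ j, (B j).Nonempty)
    (hcover : ∀ i : Fin n, ∃ j, i ∈ B j)
    (S : Finset (Fin n)) (hS : 0 < Pr p S) :
    ∑ j, projMat (B j) * rhoSigma p S * projMat (B j) =
      ∑ j ∈ Finset.univ.filter (fun j => 0 < Pr p (B j ∩ S)),
        (Pr p (B j ∩ S) / Pr p S) • rhoSigma p (B j ∩ S) := by
  have key := fun j => luders_key p hp0 S (B j)
  calc ∑ j, projMat (B j) * rhoSigma p S * projMat (B j)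
      = ∑ j, (Pr p (B j ∩ S) / Pr p S) • rhoSigma p (B j ∩ S) :=
        Finset.sum_congr rfl (fun j _ => key j)
    _ = _ := by
        rw [Finset.sum_filter]
        refine Finset.sum_congr rfl (fun j _ => ?_)
        split
        · rfl
        · next h =>
            have h0 : Pr p (B j ∩ S) = 0 :=
              le_antisymm (not_lt.mp h) (Finset.sum_nonneg fun x _ => hp0 x)
            rw [h0]
            simp
end

section
/- Repeatability of measurement: for Finsets B, S ⊆ Fin n with Pr(B ∩ S) > 0, one has tr(P_B · ρ(Σ(B ∩ S))) = 1 and P_B · ρ(Σ(B ∩ S)) · P_B = ρ(Σ(B ∩ S)); likewise tr(P_B · ρ(Δ(B ∩ S))) = 1. -/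
open Matrix BigOperators

lemma projMat_mul_apply {n : ℕ} (T : Finset (Fin n)) (M : Matrix (Fin n) (Fin n) ℝ)
    (i k : Fin n) : (projMat T * M) i k = if i ∈ T then M i k else 0 := by
  simp only [Matrix.mul_apply, projMat, Matrix.of_apply]
  rw [Finset.sum_eq_single i]
  · by_cases h : i ∈ T <;> simp [h]
  · intro b _ hb; simp [Ne.symm hb]
  · simp

lemma mul_projMat_apply {n : ℕ} (T : Finset (Fin n)) (M : Matrix (Fin n) (Fin n) ℝ)
    (i k : Fin n) : (M * projMat T) i k = if k ∈ T then M i k else 0 := by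
  simp only [Matrix.mul_apply, projMat, Matrix.of_apply]
  rw [Finset.sum_eq_single k]
  · by_cases h : k ∈ T <;> simp [h]
  · intro b _ hb; simp [hb]
  · simp

/-- Repeatability of measurement: measuring again returns the same value with
probability 1 and leaves the state unchanged. -/
theorem measurement_repeatable (n : ℕ) (hn : 1 ≤ n) (p : Fin n → ℝ)
    (hp0 : ∀ i, 0 ≤ p i) (hp1 : ∑ i, p i = 1)
    (B S : Finset (Fin n)) (hBS : 0 < Pr p (B ∩ S)) :
    (projMat B * rhoSigma p (B ∩ S)).trace = 1 ∧
    projMat B * rhoSigma p (B ∩ S) * projMat B = rhoSigma p (B ∩ S) ∧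
    (projMat B * rhoDelta p (B ∩ S)).trace = 1 := by
  have hproj : projMat B * rhoSigma p (B ∩ S) = rhoSigma p (B ∩ S) := by
    ext i k
    rw [projMat_mul_apply]
    by_cases h : i ∈ B
    · simp [h]
    · simp [rhoSigma, h]
  have hproj2 : rhoSigma p (B ∩ S) * projMat B = rhoSigma p (B ∩ S) := by
    ext i k
    rw [mul_projMat_apply]
    by_cases h : k ∈ B
    · simp [h]
    · simp [rhoSigma, h]
  have hprojd : projMat B * rhoDelta p (B ∩ S) = rhoDelta p (B ∩ S) := by
    ext i k
    rw [projMat_mul_apply]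
    by_cases h : i ∈ B
    · simp [h]
    · simp [rhoDelta, h]
  refine ⟨?_, by rw [hproj, hproj2], ?_⟩
  · rw [hproj]
    unfold Matrix.trace rhoSigma
    simp only [Matrix.diag_apply, Matrix.of_apply]
    rw [← Finset.sum_subset (Finset.subset_univ (B ∩ S))]
    · have : ∀ i ∈ B ∩ S, (if i ∈ B ∩ S ∧ i ∈ B ∩ S then Real.sqrt (p i * p i) / Pr p (B ∩ S) else 0) = p i / Pr p (B ∩ S) := by
        intro i hi; simp [hi, Real.sqrt_mul_self (hp0 i)]
      rw [Finset.sum_congr rfl this, ← Finset.sum_div]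
      exact div_self hBS.ne'
    · intro x _ hx; simp [hx]
  · rw [hprojd]
    unfold Matrix.trace rhoDelta
    simp only [Matrix.diag_apply, Matrix.of_apply]
    rw [← Finset.sum_subset (Finset.subset_univ (B ∩ S))]
    · have : ∀ i ∈ B ∩ S, (if True ∧ i ∈ B ∩ S then p i / Pr p (B ∩ S) else 0) = p i / Pr p (B ∩ S) := by
        intro i hi; simp [hi]
      rw [Finset.sum_congr rfl this, ← Finset.sum_div]
      exact div_self hBS.ne'
    · intro x _ hx; simp [hx]
end

section
/- The logical entropy of the density matrix of a partition equals the logical entropy of the partition: if π = {B_1,...,B_m} is a partition of Fin n with Pr(B_j) > 0 for every j, and ρ(π) := ∑_j Pr(B_j) · ρ(ΣB_j), then h(ρ(π)) = 1 − tr(ρ(π)²) = 1 − ∑_{j=1}^m Pr(B_j)². -/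
open Matrix BigOperators

lemma rhoSigma_mul_disjoint {n : ℕ} (p : Fin n → ℝ) (S T : Finset (Fin n))
    (h : Disjoint S T) : rhoSigma p S * rhoSigma p T = 0 := by
  ext i k
  simp only [Matrix.mul_apply, rhoSigma, Matrix.of_apply, Matrix.zero_apply]
  apply Finset.sum_eq_zero
  intro l _
  by_cases h1 : i ∈ S ∧ l ∈ S
  · by_cases h2 : l ∈ T ∧ k ∈ T
    · exact absurd h2.1 (Finset.disjoint_left.mp h h1.2)
    · simp [h2]
  · simp [h1]

lemma trace_rhoSigma_sq {n : ℕ} (p : Fin n → ℝ) (hp0 : ∀ i, 0 ≤ p i)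
    (S : Finset (Fin n)) (hS : 0 < Pr p S) :
    (rhoSigma p S * rhoSigma p S).trace = 1 := by
  rw [Matrix.trace]
  simp only [Matrix.diag_apply, Matrix.mul_apply, rhoSigma, Matrix.of_apply]
  have key : ∀ i l : Fin n,
      (if i ∈ S ∧ l ∈ S then Real.sqrt (p i * p l) / Pr p S else 0) *
      (if l ∈ S ∧ i ∈ S then Real.sqrt (p l * p i) / Pr p S else 0)
      = if i ∈ S then (if l ∈ S then p i * p l / (Pr p S * Pr p S) else 0) else 0 := by
    intro i l
    by_cases hi : i ∈ S <;> by_cases hl : l ∈ S <;> simp [hi, hl]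
    rw [div_mul_div_comm, mul_comm (p l) (p i),
      Real.mul_self_sqrt (mul_nonneg (hp0 i) (hp0 l))]
  have : ∀ i : Fin n, ∑ l : Fin n,
      (if i ∈ S ∧ l ∈ S then Real.sqrt (p i * p l) / Pr p S else 0) *
      (if l ∈ S ∧ i ∈ S then Real.sqrt (p l * p i) / Pr p S else 0)
      = if i ∈ S then ∑ l ∈ S, p i * p l / (Pr p S * Pr p S) else 0 := by
    intro i
    rw [Finset.sum_congr rfl fun l _ => key i l]
    by_cases hi : i ∈ S
    · simp only [hi, if_true]
      rw [Finset.sum_ite_mem, Finset.univ_inter]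
    · simp [hi]
  rw [Finset.sum_congr rfl fun i _ => this i, Finset.sum_ite_mem, Finset.univ_inter]
  have : ∑ i ∈ S, ∑ l ∈ S, p i * p l / (Pr p S * Pr p S)
      = (∑ i ∈ S, p i) * (∑ l ∈ S, p l) / (Pr p S * Pr p S) := by
    rw [Finset.sum_mul_sum]
    simp [Finset.sum_div]
  rw [this]
  have hPr : (∑ i ∈ S, p i) = Pr p S := rfl
  rw [hPr]
  field_simp

/-- The logical entropy of the density matrix of a partition equals the
logical entropy of the partition: h(ρ(π)) = 1 - ∑_j Pr(B_j)². -/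
theorem logicalEntropy_partition (n : ℕ) (hn : 1 ≤ n) (p : Fin n → ℝ)
    (hp0 : ∀ i, 0 ≤ p i) (hp1 : ∑ i, p i = 1)
    (m : ℕ) (B : Fin m → Finset (Fin n))
    (hdisj : ∀ j j' : Fin m, j ≠ j' → Disjoint (B j) (B j'))
    (hne : ∀ j, (B j).Nonempty)
    (hcover : ∀ i : Fin n, ∃ j, i ∈ B j)
    (hpos : ∀ j, 0 < Pr p (B j)) :
    1 - (((∑ j, Pr p (B j) • rhoSigma p (B j)) *
          (∑ j, Pr p (B j) • rhoSigma p (B j))).trace) =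
      1 - ∑ j, (Pr p (B j)) ^ 2 := by
  congr 1
  rw [Finset.sum_mul_sum]
  rw [Matrix.trace_sum]
  have : ∀ j : Fin m, ((∑ j' : Fin m,
      (Pr p (B j) • rhoSigma p (B j)) * (Pr p (B j') • rhoSigma p (B j'))).trace)
      = Pr p (B j) ^ 2 := by
    intro j
    rw [Matrix.trace_sum]
    rw [Finset.sum_eq_single j]
    · rw [Matrix.smul_mul, Matrix.mul_smul, smul_smul, Matrix.trace_smul,
        trace_rhoSigma_sq p hp0 (B j) (hpos j), smul_eq_mul, mul_one, sq]
    · intro j' _ hj'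
      rw [Matrix.smul_mul, Matrix.mul_smul,
        rhoSigma_mul_disjoint p (B j) (B j') (hdisj j j' (Ne.symm hj'))]
      simp
    · simp
  rw [Finset.sum_congr rfl fun j _ => this j]
end

section
/- The density matrix of a partition is mixed unless the partition is indiscrete: if π = {B_1,...,B_m} is a partition of Fin n having at least two blocks B_j, B_{j'} with Pr(B_j) > 0 and Pr(B_{j'}) > 0, then ρ(π) := ∑_j Pr(B_j) · ρ(ΣB_j) satisfies ρ(π) · ρ(π) ≠ ρ(π). -/
open Matrix BigOperators

/-- The density matrix of a partition is mixed unless the partition is indiscrete. -/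
theorem rho_partition_mixed (n : ℕ) (hn : 1 ≤ n) (p : Fin n → ℝ)
    (hp0 : ∀ i, 0 ≤ p i) (hp1 : ∑ i, p i = 1)
    (m : ℕ) (B : Fin m → Finset (Fin n))
    (hdisj : ∀ j j' : Fin m, j ≠ j' → Disjoint (B j) (B j'))
    (hne : ∀ j, (B j).Nonempty)
    (hcover : ∀ i : Fin n, ∃ j, i ∈ B j)
    (j j' : Fin m) (hjj' : j ≠ j')
    (hj : 0 < Pr p (B j)) (hj' : 0 < Pr p (B j')) :
    (∑ l, Pr p (B l) • rhoSigma p (B l)) * (∑ l, Pr p (B l) • rhoSigma p (B l)) ≠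
      ∑ l, Pr p (B l) • rhoSigma p (B l) := by
  intro heq
  obtain ⟨i, hiB, hpi⟩ : ∃ i ∈ B j, 0 < p i := by
    by_contra h
    push_neg at h
    have : Pr p (B j) ≤ 0 := Finset.sum_nonpos fun i hi => h i hi
    linarith
  have hPrj : Pr p (B j) ≠ 0 := ne_of_gt hj
  have key : ∀ a b : Fin n, a ∈ B j →
      (∑ l, Pr p (B l) • rhoSigma p (B l)) a b
        = if b ∈ B j then Real.sqrt (p a * p b) else 0 := by
    intro a b haB
    rw [Matrix.sum_apply]
    rw [Finset.sum_eq_single j]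
    · simp only [Matrix.smul_apply, rhoSigma, Matrix.of_apply, smul_eq_mul]
      split_ifs with h1 h2 h2
      · field_simp
      · exact absurd h1.2 h2
      · exact absurd ⟨haB, h2⟩ h1
      · rw [mul_zero]
    · intro l _ hl
      simp only [Matrix.smul_apply, rhoSigma, Matrix.of_apply, smul_eq_mul]
      have hal : a ∉ B l := fun ha => (Finset.disjoint_left.mp (hdisj l j hl)) ha haB
      rw [if_neg (fun h => hal h.1), mul_zero]
    · intro h
      exact absurd (Finset.mem_univ j) h
  have hdiag : ((∑ l, Pr p (B l) • rhoSigma p (B l)) *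
      (∑ l, Pr p (B l) • rhoSigma p (B l))) i i = p i * Pr p (B j) := by
    rw [Matrix.mul_apply]
    have : ∀ a : Fin n, (∑ l, Pr p (B l) • rhoSigma p (B l)) i a *
        (∑ l, Pr p (B l) • rhoSigma p (B l)) a i
          = if a ∈ B j then p i * p a else 0 := by
      intro a
      by_cases ha : a ∈ B j
      · rw [key i a hiB, key a i ha, if_pos ha, if_pos hiB, mul_comm (p a) (p i),
          Real.mul_self_sqrt (mul_nonneg (hp0 i) (hp0 a)), if_pos ha]
      · rw [key i a hiB, if_neg ha, zero_mul, if_neg ha]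
    rw [Finset.sum_congr rfl fun a _ => this a, Finset.sum_ite_mem,
      Finset.univ_inter, ← Finset.mul_sum]
    rfl
  have hdiag2 : (∑ l, Pr p (B l) • rhoSigma p (B l)) i i = p i := by
    rw [key i i hiB, if_pos hiB, Real.sqrt_mul_self (hp0 i)]
  have hPrlt : Pr p (B j) < 1 := by
    have hsum : Pr p (B j) + Pr p (B j') ≤ 1 := by
      have hd : Disjoint (B j) (B j') := hdisj j j' hjj'
      have := Finset.sum_union hd (f := p)
      calc Pr p (B j) + Pr p (B j') = ∑ i ∈ B j ∪ B j', p i := (Finset.sum_union hd).symm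
        _ ≤ ∑ i, p i := Finset.sum_le_sum_of_subset_of_nonneg
            (Finset.subset_univ _) (fun i _ _ => hp0 i)
        _ = 1 := hp1
    linarith
  have h3 := congrFun (congrFun heq i) i
  rw [hdiag, hdiag2] at h3
  nlinarith
end

section
/- Main theorem (explicit form): let π = {B_1,...,B_m} be a partition of Fin n and S ⊆ Fin n with Pr(S) > 0, and set ρ(π↾S) := ∑_j P_{B_j} · ρ(ΣS) · P_{B_j}. Then h(ρ(π↾S)) = ∑ (p i · p k)/Pr(S)², where the sum runs over all ordered pairs (i,k) with i ∈ S, k ∈ S, and i, k lying in different blocks of π; i.e., the logical entropy created by the measurement is the sum of the squares of the off-diagonal entries of ρ(ΣS) that are zeroed in the Lüders mixture operation. -/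
open Matrix BigOperators

/-- Main theorem (explicit form): the logical entropy created by the measurement
is the sum of the squares (p i * p k)/Pr(S)² of the off-diagonal entries of
ρ(ΣS) over ordered pairs (i,k) ∈ S × S lying in different blocks of π. -/
theorem measurement_entropy_explicit (n : ℕ) (hn : 1 ≤ n) (p : Fin n → ℝ)
    (hp0 : ∀ i, 0 ≤ p i) (hp1 : ∑ i, p i = 1)
    (m : ℕ) (B : Fin m → Finset (Fin n))
    (hdisj : ∀ j j' : Fin m, j ≠ j' → Disjoint (B j) (B j'))
    (hne : ∀ j, (B j).Nonempty)
    (hcover : ∀ i : Fin n, ∃ j, i ∈ B j)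
    (S : Finset (Fin n)) (hS : 0 < Pr p S) :
    1 - (((∑ j, projMat (B j) * rhoSigma p S * projMat (B j)) *
          (∑ j, projMat (B j) * rhoSigma p S * projMat (B j))).trace) =
      ∑ i ∈ S, ∑ k ∈ S,
        (if ∃ j j' : Fin m, j ≠ j' ∧ i ∈ B j ∧ k ∈ B j' then
          p i * p k / (Pr p S) ^ 2 else 0) := by

  classical
  set A := ∑ j, projMat (B j) * rhoSigma p S * projMat (B j) with hA
  have huniq : ∀ (i : Fin n) (j j' : Fin m), i ∈ B j → i ∈ B j' → j = j' := by
    intro i j j' hj hj'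
    by_contra h
    exact (Finset.disjoint_left.mp (hdisj j j' h) hj) hj'
  have hterm : ∀ (j : Fin m) (i k : Fin n),
      (projMat (B j) * rhoSigma p S * projMat (B j)) i k =
      if i ∈ B j ∧ k ∈ B j ∧ i ∈ S ∧ k ∈ S then Real.sqrt (p i * p k) / Pr p S else 0 := by
    intro j i k
    have hproj : projMat (B j) = Matrix.diagonal (fun i => if i ∈ B j then (1:ℝ) else 0) := by
      ext a b
      by_cases h : a = b <;> simp [projMat, Matrix.diagonal_apply, h]
    rw [hproj, Matrix.mul_diagonal, Matrix.diagonal_mul]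
    by_cases h1 : i ∈ B j <;> by_cases h2 : k ∈ B j <;>
      by_cases h3 : i ∈ S <;> by_cases h4 : k ∈ S <;>
        simp [rhoSigma, h1, h2, h3, h4]
  have hentry : ∀ i k, A i k =
      if (∃ j, i ∈ B j ∧ k ∈ B j) ∧ i ∈ S ∧ k ∈ S then
        Real.sqrt (p i * p k) / Pr p S else 0 := by
    intro i k
    rw [hA, Matrix.sum_apply]
    simp only [hterm]
    by_cases hik : ∃ j, i ∈ B j ∧ k ∈ B j
    · obtain ⟨j0, hj0⟩ := hik
      rw [Finset.sum_eq_single j0]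
      · have hex : ∃ j, i ∈ B j ∧ k ∈ B j := ⟨j0, hj0⟩
        simp [hj0.1, hj0.2, hex]
      · intro b _ hb
        have : ¬ (i ∈ B b ∧ k ∈ B b ∧ i ∈ S ∧ k ∈ S) := by
          rintro ⟨h1, -, -⟩; exact hb (huniq i b j0 h1 hj0.1)
        simp [this]
      · intro h; exact absurd (Finset.mem_univ j0) h
    · have h0 : ¬ ((∃ j, i ∈ B j ∧ k ∈ B j) ∧ i ∈ S ∧ k ∈ S) := fun h => hik h.1
      rw [if_neg h0]
      apply Finset.sum_eq_zero
      intro j _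
      have : ¬ (i ∈ B j ∧ k ∈ B j ∧ i ∈ S ∧ k ∈ S) := by
        rintro ⟨h1, h2, -⟩; exact hik ⟨j, h1, h2⟩
      simp [this]
  have hsq : ∀ i k, A i k * A k i =
      if (∃ j, i ∈ B j ∧ k ∈ B j) ∧ i ∈ S ∧ k ∈ S then p i * p k / (Pr p S)^2 else 0 := by
    intro i k
    rw [hentry, hentry]
    by_cases h : (∃ j, i ∈ B j ∧ k ∈ B j) ∧ i ∈ S ∧ k ∈ S
    · have h' : (∃ j, k ∈ B j ∧ i ∈ B j) ∧ k ∈ S ∧ i ∈ S := by tauto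
      rw [if_pos h, if_pos h', if_pos h, mul_comm (p k) (p i),
        div_mul_div_comm, Real.mul_self_sqrt (mul_nonneg (hp0 i) (hp0 k)), sq]
    · have h' : ¬((∃ j, k ∈ B j ∧ i ∈ B j) ∧ k ∈ S ∧ i ∈ S) := by
        rintro ⟨⟨j, hkj, hij⟩, hk, hi⟩
        exact h ⟨⟨j, hij, hkj⟩, hi, hk⟩
      rw [if_neg h, if_neg h', if_neg h, mul_zero]
  have htr : (A * A).trace = ∑ i, ∑ k, A i k * A k i := by
    simp [Matrix.trace, Matrix.mul_apply, Matrix.diag]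
  have htr2 : (A * A).trace = ∑ i ∈ S, ∑ k ∈ S,
      (if ∃ j, i ∈ B j ∧ k ∈ B j then p i * p k / (Pr p S)^2 else 0) := by
    rw [htr]
    simp only [hsq]
    rw [← Finset.sum_subset (Finset.subset_univ S) (by
      intro i _ hiS
      apply Finset.sum_eq_zero
      intro k _
      exact if_neg (fun h => hiS h.2.1))]
    apply Finset.sum_congr rfl
    intro i hi
    rw [← Finset.sum_subset (Finset.subset_univ S) (by
      intro k _ hkS
      exact if_neg (fun h => hkS h.2.2))]
    apply Finset.sum_congr rfl
    intro k hk
    simp [hi, hk]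
  have hone : ∑ i ∈ S, ∑ k ∈ S, p i * p k / (Pr p S)^2 = 1 := by
    have h2 : (Pr p S)^2 ≠ 0 := by positivity
    calc ∑ i ∈ S, ∑ k ∈ S, p i * p k / (Pr p S)^2
        = (∑ i ∈ S, ∑ k ∈ S, p i * p k) / (Pr p S)^2 := by
          rw [Finset.sum_div]
          exact Finset.sum_congr rfl fun i _ => (Finset.sum_div _ _ _).symm
      _ = (Pr p S * Pr p S) / (Pr p S)^2 := by rw [← Finset.sum_mul_sum]; rfl
      _ = 1 := by rw [sq]; field_simp
  have hkey : ∀ i k, i ∈ S → k ∈ S →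
      p i * p k / (Pr p S)^2 =
        (if ∃ j, i ∈ B j ∧ k ∈ B j then p i * p k / (Pr p S)^2 else 0) +
        (if ∃ j j' : Fin m, j ≠ j' ∧ i ∈ B j ∧ k ∈ B j' then p i * p k / (Pr p S)^2 else 0) := by
    intro i k _ _
    obtain ⟨j0, hj0⟩ := hcover i
    obtain ⟨j1, hj1⟩ := hcover k
    by_cases h : j0 = j1
    · subst h
      rw [if_pos ⟨j0, hj0, hj1⟩, if_neg, add_zero]
      rintro ⟨j, j', hne', hj, hj'⟩
      exact hne' ((huniq i j j0 hj hj0).trans (huniq k j' j0 hj' hj1).symm)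
    · rw [if_neg, if_pos ⟨j0, j1, h, hj0, hj1⟩, zero_add]
      rintro ⟨j, hj, hj'⟩
      exact h ((huniq i j0 j hj0 hj).trans (huniq k j j1 hj' hj1))
  have hsplit : ∑ i ∈ S, ∑ k ∈ S, p i * p k / (Pr p S)^2 =
      (∑ i ∈ S, ∑ k ∈ S, if ∃ j, i ∈ B j ∧ k ∈ B j then p i * p k / (Pr p S)^2 else 0) +
      (∑ i ∈ S, ∑ k ∈ S, if ∃ j j' : Fin m, j ≠ j' ∧ i ∈ B j ∧ k ∈ B j' then
        p i * p k / (Pr p S)^2 else 0) := by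
    rw [← Finset.sum_add_distrib]
    apply Finset.sum_congr rfl; intro i hi
    rw [← Finset.sum_add_distrib]
    exact Finset.sum_congr rfl fun k hk => hkey i k hi hk
  rw [htr2]
  linarith [hone, hsplit]
end
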